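/- Let G = (G^i)_{i∈I} be a P₁-exact gradient reconstruction on a bounded set U ⊂ ℝ^d (star-shaped with respect to a ball of diameter ≥ θ^{-1}·diam(U)) upon points S = (x_i)_{i∈I} ⊂ Ū, d ≤ 3, and let φ ∈ H²(U) ∩ C(Ū). Suppose an affine L satisfies sup_Ū |φ − L| ≤ C₁ diam(U)² |U|^{-1/2} ‖φ‖_{H²(U)} and ‖∇L − ∇φ‖_{L²(U)} ≤ C₁ diam(U) ‖φ‖_{H²(U)}. If ξ_i are values with |ξ_i − L(x_i)| ≤ C₁ diam(U)² |U|^{-1/2} ‖φ‖_{H²(U)} for all i, then ‖Gξ − ∇φ‖_{L²(U)^d} ≤ C₂ (1 + ‖G‖) diam(U) ‖φ‖_{H²(U)}, with C₂ depending only on C₁. -/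

import Mathlib

/-!
Write `ℓᵢ = L(xᵢ)`. By `P₁`-exactness `Σᵢ ℓᵢ Gⁱ = ∇L` a.e., so
`Gξ − ∇φ = Σᵢ (ξᵢ − ℓᵢ) Gⁱ + (∇L − ∇φ)`. The first term is pointwise at most
`C₁ diam(U)² |U|^{-1/2} ‖φ‖_{H²} Σᵢ |Gⁱ|`, whose `L²` norm is exactly `C₁ diam(U) ‖φ‖_{H²} ‖G‖`
by the normalisation of `‖G‖`; the second is `≤ C₁ diam(U) ‖φ‖_{H²}` by hypothesis.
Minkowski's inequality then gives the claim with `C₂ = C₁`.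
-/

open Metric MeasureTheory ENNReal

/-- The `H²(U)` norm of `φ`. -/
noncomputable def H2norm {d : ℕ} (U : Set (EuclideanSpace ℝ (Fin d)))
    (φ : EuclideanSpace ℝ (Fin d) → ℝ) : ℝ :=
  (∫ x in U, ((φ x) ^ 2 + ‖fderiv ℝ φ x‖ ^ 2 + ‖iteratedFDeriv ℝ 2 φ x‖ ^ 2)) ^ ((1 : ℝ) / 2)

/-- The norm `‖G‖ = diam(U)|U|^{−1/2}‖Σ_i |Gⁱ|‖_{L²(U)}` of a gradient reconstruction. -/
noncomputable def normG {d : ℕ} {I : Type} [Fintype I]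
    (U : Set (EuclideanSpace ℝ (Fin d)))
    (G : I → EuclideanSpace ℝ (Fin d) → EuclideanSpace ℝ (Fin d)) : ℝ :=
  diam U * (volume U).toReal ^ (-(1 : ℝ) / 2) *
    (∫ x in U, (∑ i, ‖G i x‖) ^ 2) ^ ((1 : ℝ) / 2)

theorem H2norm_nonneg {d : ℕ} (U : Set (EuclideanSpace ℝ (Fin d)))
    (φ : EuclideanSpace ℝ (Fin d) → ℝ) : 0 ≤ H2norm U φ := by
  unfold H2norm
  positivity

theorem sum_smul_sub_eq_sum_sub_smul_add {ι F : Type*} [Fintype ι] [AddCommGroup F]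
    [Module ℝ F] (ξ ℓ : ι → ℝ) (g : ι → F) {w : F} (hw : ∑ i, ℓ i • g i = w) (y : F) :
    ∑ i, ξ i • g i - y = ∑ i, (ξ i - ℓ i) • g i + (w - y) := by
  rw [← hw]
  simp only [sub_smul, Finset.sum_sub_distrib]
  abel

theorem norm_sum_smul_le_mul_sum_norm {ι F : Type*} [Fintype ι] [SeminormedAddCommGroup F]
    [NormedSpace ℝ F] {a : ι → ℝ} {A : ℝ} (ha : ∀ i, |a i| ≤ A) (v : ι → F) :
    ‖∑ i, a i • v i‖ ≤ A * ∑ i, ‖v i‖ :=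
  calc ‖∑ i, a i • v i‖ ≤ ∑ i, |a i| * ‖v i‖ := by
        simpa only [norm_smul, Real.norm_eq_abs] using
          norm_sum_le Finset.univ fun i ↦ a i • v i
    _ ≤ A * ∑ i, ‖v i‖ := by
        rw [Finset.mul_sum]
        gcongr with i
        exact ha i

namespace MeasureTheory

variable {α E : Type*} [MeasurableSpace α] {μ : Measure α} [NormedAddCommGroup E]

theorem MemLp.toReal_eLpNorm_two {f : α → E} (hf : MemLp f 2 μ) :
    (eLpNorm f 2 μ).toReal = (∫ x, ‖f x‖ ^ 2 ∂μ) ^ ((1 : ℝ) / 2) := by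
  rw [hf.eLpNorm_eq_integral_rpow_norm two_ne_zero ofNat_ne_top,
    toReal_ofReal (by positivity)]
  norm_num

theorem integral_norm_add_sq_rpow_half_le {f g : α → E} (hf : MemLp f 2 μ) (hg : MemLp g 2 μ) :
    (∫ x, ‖f x + g x‖ ^ 2 ∂μ) ^ ((1 : ℝ) / 2) ≤
      (∫ x, ‖f x‖ ^ 2 ∂μ) ^ ((1 : ℝ) / 2) + (∫ x, ‖g x‖ ^ 2 ∂μ) ^ ((1 : ℝ) / 2) := by
  rw [← hf.toReal_eLpNorm_two, ← hg.toReal_eLpNorm_two,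
    ← MemLp.toReal_eLpNorm_two (f := fun x ↦ f x + g x) (hf.add hg),
    ← toReal_add hf.eLpNorm_ne_top hg.eLpNorm_ne_top]
  exact toReal_mono (add_ne_top.2 ⟨hf.eLpNorm_ne_top, hg.eLpNorm_ne_top⟩)
    (eLpNorm_add_le hf.1 hg.1 one_le_two)

theorem integral_norm_sq_rpow_half_le_mul {F : Type*} [NormedAddCommGroup F] {f : α → E}
    {g : α → F} {c : ℝ} (hc : 0 ≤ c) (hf : MemLp f 2 μ) (hg : MemLp g 2 μ)
    (h : ∀ᵐ x ∂μ, ‖f x‖ ≤ c * ‖g x‖) :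
    (∫ x, ‖f x‖ ^ 2 ∂μ) ^ ((1 : ℝ) / 2) ≤ c * (∫ x, ‖g x‖ ^ 2 ∂μ) ^ ((1 : ℝ) / 2) := by
  rw [← hf.toReal_eLpNorm_two, ← hg.toReal_eLpNorm_two, ← toReal_ofReal hc, ← toReal_mul]
  exact toReal_mono (mul_ne_top ofReal_ne_top hg.eLpNorm_ne_top)
    (eLpNorm_le_mul_eLpNorm_of_ae_le_mul h 2)

theorem integral_norm_sum_smul_sq_rpow_half_le {ι : Type*} [Fintype ι] [NormedSpace ℝ E]
    {G : ι → α → E} (hG : ∀ i, MemLp (G i) 2 μ) {a : ι → ℝ} {A : ℝ} (hA : 0 ≤ A)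
    (ha : ∀ i, |a i| ≤ A) :
    (∫ x, ‖∑ i, a i • G i x‖ ^ 2 ∂μ) ^ ((1 : ℝ) / 2) ≤
      A * (∫ x, (∑ i, ‖G i x‖) ^ 2 ∂μ) ^ ((1 : ℝ) / 2) := by
  have hsum : ∀ x, ‖∑ i, ‖G i x‖‖ = ∑ i, ‖G i x‖ := fun x ↦
    Real.norm_of_nonneg (Finset.sum_nonneg fun i _ ↦ norm_nonneg _)
  have key := integral_norm_sq_rpow_half_le_mul hA
    (memLp_finsetSum (f := fun i x ↦ a i • G i x) _ fun i _ ↦ (hG i).const_smul (a i))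
    (memLp_finsetSum (f := fun i x ↦ ‖G i x‖) _ fun i _ ↦ (hG i).norm)
    (ae_of_all _ fun x ↦ (norm_sum_smul_le_mul_sum_norm ha _).trans_eq (by rw [hsum]))
  simpa only [hsum] using key

end MeasureTheory

theorem Continuous.memLp_restrict_of_isBounded {X : Type*} [PseudoMetricSpace X]
    [ProperSpace X] [MeasurableSpace X] [OpensMeasurableSpace X] {μ : Measure X}
    [IsFiniteMeasureOnCompacts μ] {E : Type*} [NormedAddCommGroup E] {f : X → E}
    (hf : Continuous f) {U : Set X} (hU : Bornology.IsBounded U) (p : ℝ≥0∞) :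
    MemLp f p (μ.restrict U) := by
  obtain ⟨C, hC⟩ := hU.isCompact_closure.exists_bound_of_continuousOn hf.continuousOn
  have : IsFiniteMeasure (μ.restrict (closure U)) :=
    isFiniteMeasure_restrict.2 hU.isCompact_closure.measure_lt_top.ne
  exact (MemLp.of_bound hf.aestronglyMeasurable C
    ((ae_restrict_mem measurableSet_closure).mono hC)).mono_measure
    (Measure.restrict_mono subset_closure le_rfl)

/-- interpolation error for a `P₁`-exact gradient reconstruction. If `G` is
`P₁`-exact on `U` upon points `(x_i) ⊂ Ū` (`U` star-shaped w.r.t. a ball of diameter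
`≥ θ⁻¹ diam U`, `d ≤ 3`), `L` is affine with `sup_Ū |φ − L| ≤ C₁ diam(U)²|U|^{−1/2}‖φ‖_{H²}`,
`‖∇L − ∇φ‖_{L²(U)} ≤ C₁ diam(U)‖φ‖_{H²}`, and `|ξ_i − L(x_i)| ≤ C₁ diam(U)²|U|^{−1/2}‖φ‖_{H²}`,
then `‖Gξ − ∇φ‖_{L²(U)^d} ≤ C₂ (1 + ‖G‖) diam(U) ‖φ‖_{H²(U)}` with `C₂ = C₂(C₁)`. -/
theorem stmt13 (C₁ : ℝ) (hC₁ : 0 < C₁) :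
    ∃ C₂ > 0, ∀ (d : ℕ), d ≤ 3 → ∀ {I : Type} [Fintype I] [Nonempty I],
      ∀ (θ : ℝ) (U : Set (EuclideanSpace ℝ (Fin d))) (z : EuclideanSpace ℝ (Fin d)) (r : ℝ)
        (p : I → EuclideanSpace ℝ (Fin d))
        (G : I → EuclideanSpace ℝ (Fin d) → EuclideanSpace ℝ (Fin d))
        (φ : EuclideanSpace ℝ (Fin d) → ℝ)
        (L : EuclideanSpace ℝ (Fin d) →ᵃ[ℝ] ℝ) (ξ : I → ℝ),
      0 < θ → Bornology.IsBounded U → 0 < (volume U).toReal → 0 < r → ball z r ⊆ U →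
      (∀ y ∈ ball z r, ∀ x ∈ U, segment ℝ y x ⊆ U) →
      θ⁻¹ * diam U ≤ 2 * r →
      (∀ i, p i ∈ closure U) →
      (∀ i, MemLp (G i) 2 (volume.restrict U)) →
      (∀ (L' : EuclideanSpace ℝ (Fin d) →L[ℝ] ℝ) (c : ℝ),
        ∀ᵐ x ∂(volume.restrict U),
          ∑ i, (L' (p i) + c) • G i x = (InnerProductSpace.toDual ℝ _).symm L') →
      ContDiff ℝ 2 φ →
      (∀ x ∈ closure U,
        |φ x - L x| ≤ C₁ * diam U ^ 2 * (volume U).toReal ^ (-(1 : ℝ) / 2) * H2norm U φ) →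
      (∫ x in U, ‖gradient φ x -
          (InnerProductSpace.toDual ℝ _).symm (LinearMap.toContinuousLinearMap L.linear)‖ ^ 2)
          ^ ((1 : ℝ) / 2) ≤ C₁ * diam U * H2norm U φ →
      (∀ i, |ξ i - L (p i)| ≤ C₁ * diam U ^ 2 * (volume U).toReal ^ (-(1 : ℝ) / 2) * H2norm U φ) →
      (∫ x in U, ‖(∑ i, ξ i • G i x) - gradient φ x‖ ^ 2) ^ ((1 : ℝ) / 2) ≤
        C₂ * (1 + normG U G) * diam U * H2norm U φ := by
  refine ⟨C₁, hC₁, ?_⟩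
  intro d _ I _ _ θ U z r p G φ L ξ _ hU _ _ _ _ _ _ hG hexact hφ _ hLgrad hξ
  obtain ⟨v, hv⟩ : ∃ v, (InnerProductSpace.toDual ℝ _).symm
      (LinearMap.toContinuousLinearMap L.linear) = v := ⟨_, rfl⟩
  rw [hv] at hLgrad
  have hA : 0 ≤ C₁ * diam U ^ 2 * (volume U).toReal ^ (-(1 : ℝ) / 2) * H2norm U φ := by
    have := diam_nonneg (s := U)
    have := H2norm_nonneg U φ
    positivity
  have hgrad : MemLp (fun x ↦ v - gradient φ x) 2 (volume.restrict U) :=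
    (continuous_const.sub ((InnerProductSpace.toDual ℝ _).symm.continuous.comp
      (hφ.continuous_fderiv two_ne_zero))).memLp_restrict_of_isBounded hU 2
  have hsplit : ∀ᵐ x ∂volume.restrict U, (∑ i, ξ i • G i x) - gradient φ x =
      ∑ i, (ξ i - L (p i)) • G i x + (v - gradient φ x) := by
    have hL : ∀ y, L.linear y + L 0 = L y := fun y ↦ (congrFun L.decomp y).symm
    filter_upwards [hexact (LinearMap.toContinuousLinearMap L.linear) (L 0)] with x hx
    exact sum_smul_sub_eq_sum_sub_smul_add ξ (fun i ↦ L (p i)) _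
      (by simpa only [LinearMap.coe_toContinuousLinearMap', hL, hv] using hx) _
  calc (∫ x in U, ‖(∑ i, ξ i • G i x) - gradient φ x‖ ^ 2) ^ ((1 : ℝ) / 2)
      = (∫ x in U, ‖∑ i, (ξ i - L (p i)) • G i x + (v - gradient φ x)‖ ^ 2) ^ ((1 : ℝ) / 2) := by
        congr 1
        exact integral_congr_ae (hsplit.mono fun x hx ↦ congrArg (‖·‖ ^ 2) hx)
    _ ≤ (∫ x in U, ‖∑ i, (ξ i - L (p i)) • G i x‖ ^ 2) ^ ((1 : ℝ) / 2) +
          (∫ x in U, ‖v - gradient φ x‖ ^ 2) ^ ((1 : ℝ) / 2) :=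
        integral_norm_add_sq_rpow_half_le
          (memLp_finsetSum _ fun i _ ↦ (hG i).const_smul (ξ i - L (p i))) hgrad
    _ ≤ C₁ * diam U ^ 2 * (volume U).toReal ^ (-(1 : ℝ) / 2) * H2norm U φ *
            (∫ x in U, (∑ i, ‖G i x‖) ^ 2) ^ ((1 : ℝ) / 2) + C₁ * diam U * H2norm U φ := by
        gcongr
        · exact integral_norm_sum_smul_sq_rpow_half_le hG hA hξ
        · simpa only [norm_sub_rev] using hLgrad
    _ = C₁ * (1 + normG U G) * diam U * H2norm U φ := by
        unfold normG
        ring
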